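/- arXiv:2308.15580 — 6 statements merged into one kernel-verified Lean document; each statement's English description precedes it below -/
import Mathlib

section
/- Let X ⊆ Y be full continua in the complex plane and let D be a decoration of Y relative to X. Then D ∪ X = cl(D) ∪ X, and this set is a full continuum, i.e., it is nonempty, compact, connected, and its complement in ℂ is connected. -/
/-- A *full continuum* in the plane: a nonempty compact connected set whose
complement is connected. (`IsConnected` includes nonemptiness.) -/
def FullContinuum (X : Set ℂ) : Prop :=
  IsCompact X ∧ IsConnected X ∧ IsConnected Xᶜ

/-!
The closure of the decoration `D` can only add points of `X`, since a component of `Y \ X`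
absorbs its limit points lying in `Y \ X`; this gives the equation and compactness.
Connectedness is the boundary bumping theorem: `closure D` meets `X`, because otherwise a
Šura-Bura clopen set around `D` would disconnect `Y`.
For the complement, every component `V` of `(D ∪ X)ᶜ` reaches `Yᶜ`: if `V ⊆ Y`, then `V`
lies in a decoration other than `D`, so it absorbs its limit points outside `X`, and
connectedness of `Xᶜ` forces `Xᶜ ⊆ V ⊆ Y`, which is absurd.
-/

open Set Topology

section Components

variable {α : Type*} [TopologicalSpace α]

theorem closure_connectedComponentIn_inter_subset (s : Set α) (x : α) :
    closure (connectedComponentIn s x) ∩ s ⊆ connectedComponentIn s x := by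
  by_cases hx : x ∈ s
  · have hsub : connectedComponentIn s x ⊆ closure (connectedComponentIn s x) ∩ s :=
      subset_inter subset_closure (connectedComponentIn_subset s x)
    exact (isPreconnected_connectedComponentIn.subset_closure hsub inter_subset_left
      ).subset_connectedComponentIn (hsub (mem_connectedComponentIn hx)) inter_subset_right
  · simp [connectedComponentIn_eq_empty hx]

theorem closure_connectedComponentIn_diff_subset {Y : Set α} (hY : IsClosed Y) (X : Set α)
    (x : α) : closure (connectedComponentIn (Y \ X) x) ⊆ connectedComponentIn (Y \ X) x ∪ X := by
  intro w hw
  by_cases hwX : w ∈ X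
  · exact Or.inr hwX
  · have hwY : w ∈ Y :=
      closure_minimal ((connectedComponentIn_subset _ x).trans sdiff_subset) hY hw
    exact Or.inl (closure_connectedComponentIn_inter_subset _ x ⟨hw, hwY, hwX⟩)

theorem connectedComponentIn_diff_union_eq {Y : Set α} (hY : IsClosed Y) (X : Set α) (x : α) :
    connectedComponentIn (Y \ X) x ∪ X = closure (connectedComponentIn (Y \ X) x) ∪ X :=
  (union_subset_union_left X subset_closure).antisymm
    (union_subset (closure_connectedComponentIn_diff_subset hY X x) subset_union_right)

theorem connectedComponentIn_diff_union_subset {X Y : Set α} (hXY : X ⊆ Y) (x : α) :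
    connectedComponentIn (Y \ X) x ∪ X ⊆ Y :=
  union_subset ((connectedComponentIn_subset _ x).trans sdiff_subset) hXY

theorem isClosed_connectedComponentIn_diff_union {X Y : Set α} (hY : IsClosed Y)
    (hX : IsClosed X) (x : α) : IsClosed (connectedComponentIn (Y \ X) x ∪ X) := by
  rw [connectedComponentIn_diff_union_eq hY X x]
  exact isClosed_closure.union hX

end Components

theorem exists_isClopen_of_connectedComponent_subset {β : Type*} [TopologicalSpace β]
    [CompactSpace β] [T2Space β] {x : β} {U : Set β} (hU : IsOpen U)
    (h : connectedComponent x ⊆ U) : ∃ V : Set β, IsClopen V ∧ x ∈ V ∧ V ⊆ U := by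
  have hempty : Uᶜ ∩ ⋂ s : { s : Set β // IsClopen s ∧ x ∈ s }, (s : Set β) = ∅ := by
    rw [← connectedComponent_eq_iInter_isClopen, eq_empty_iff_forall_notMem]
    exact fun z hz => hz.1 (h hz.2)
  obtain ⟨t, ht⟩ :=
    hU.isClosed_compl.isCompact.elim_finite_subfamily_closed _ (fun s => s.2.1.1) hempty
  refine ⟨⋂ i ∈ t, (i : Set β), isClopen_biInter_finset (fun i _ => i.2.1),
    mem_iInter₂.mpr fun i _ => i.2.2, fun z hz => ?_⟩
  by_contra hzU
  exact (eq_empty_iff_forall_notMem.mp ht z) ⟨hzU, hz⟩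

theorem closure_connectedComponentIn_compl_inter_nonempty {β : Type*} [TopologicalSpace β]
    [CompactSpace β] [T2Space β] [PreconnectedSpace β] {X : Set β} (hX : IsClosed X)
    (hXne : X.Nonempty) {x : β} (hx : x ∉ X) :
    (closure (connectedComponentIn Xᶜ x) ∩ X).Nonempty := by
  by_contra hdisj
  rw [← not_disjoint_iff_nonempty_inter, not_not] at hdisj
  set C := connectedComponentIn Xᶜ x
  have hC : IsClosed C := isClosed_of_closure_subset fun w hw =>
    closure_connectedComponentIn_inter_subset _ x ⟨hw, hdisj.subset_compl_right hw⟩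
  obtain ⟨W₁, W₂, hW₁, hW₂, hCW₁, hXW₂, hW⟩ :=
    normal_separation hC hX (hdisj.mono_left subset_closure)
  have : CompactSpace (W₂ᶜ : Set β) := isCompact_iff_compactSpace.mp hW₂.isClosed_compl.isCompact
  have hxW₂ : x ∈ W₂ᶜ := hW.subset_compl_right (hCW₁ (mem_connectedComponentIn hx))
  have hcomp : connectedComponent (⟨x, hxW₂⟩ : (W₂ᶜ : Set β)) ⊆ Subtype.val ⁻¹' W₁ := by
    intro q hq
    have hsub : connectedComponentIn W₂ᶜ x ⊆ C :=
      connectedComponentIn_mono x (compl_subset_compl.mpr hXW₂)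
    exact hCW₁ (hsub (connectedComponentIn_eq_image hxW₂ ▸ mem_image_of_mem _ hq))
  obtain ⟨V, hV, hxV, hVW₁⟩ :=
    exists_isClopen_of_connectedComponent_subset (hW₁.preimage continuous_subtype_val) hcomp
  obtain ⟨O, hO, rfl⟩ := isOpen_induced_iff.mp hV.isOpen
  -- `V` is open in `β`, not only in `W₂ᶜ`, because it lies in the open set `W₁ ⊆ W₂ᶜ`
  have hVO : Subtype.val '' (Subtype.val ⁻¹' O : Set (W₂ᶜ : Set β)) = O ∩ W₁ := by
    ext w
    constructor
    · rintro ⟨q, hq, rfl⟩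
      exact ⟨hq, hVW₁ hq⟩
    · rintro ⟨hwO, hwW₁⟩
      exact ⟨⟨w, hW.subset_compl_right hwW₁⟩, hwO, rfl⟩
  have hVclopen : IsClopen (O ∩ W₁) :=
    ⟨hVO ▸ (hV.isClosed.isCompact.image continuous_subtype_val).isClosed, hO.inter hW₁⟩
  rcases isClopen_iff.mp hVclopen with hempty | huniv
  · exact hempty.subset (hVO ▸ mem_image_of_mem _ hxV)
  · obtain ⟨y, hy⟩ := hXne
    exact hW.subset_compl_right (huniv ▸ mem_univ y : y ∈ O ∩ W₁).2 (hXW₂ hy)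

theorem IsCompact.closure_connectedComponentIn_diff_inter_nonempty {α : Type*}
    [TopologicalSpace α] [T2Space α] {X Y : Set α} (hY : IsCompact Y) (hYconn : IsPreconnected Y)
    (hX : IsClosed X) (hXY : (Y ∩ X).Nonempty) {x : α} (hx : x ∈ Y \ X) :
    (closure (connectedComponentIn (Y \ X) x) ∩ X).Nonempty := by
  have : CompactSpace Y := isCompact_iff_compactSpace.mp hY
  have : PreconnectedSpace Y := Subtype.preconnectedSpace hYconn
  obtain ⟨y, hyY, hyX⟩ := hXY
  obtain ⟨z, hzC, hzX⟩ := closure_connectedComponentIn_compl_inter_nonempty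
    (hX.preimage continuous_subtype_val) ⟨⟨y, hyY⟩, hyX⟩ (x := ⟨x, hx.1⟩) hx.2
  have himage : Subtype.val '' connectedComponentIn (Subtype.val ⁻¹' X)ᶜ ⟨x, hx.1⟩ ⊆
      connectedComponentIn (Y \ X) x := by
    refine (isPreconnected_connectedComponentIn.image _
      continuous_subtype_val.continuousOn).subset_connectedComponentIn
        ⟨_, mem_connectedComponentIn hx.2, rfl⟩ ?_
    rintro _ ⟨q, hq, rfl⟩
    exact ⟨q.2, connectedComponentIn_subset _ _ hq⟩
  exact ⟨z, closure_mono himage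
    (image_closure_subset_closure_image continuous_subtype_val ⟨z, hzC, rfl⟩), hzX⟩

section Complement

variable {α : Type*} [TopologicalSpace α] [LocallyConnectedSpace α] {X Y : Set α}

theorem connectedComponentIn_compl_diff_union_inter_compl_nonempty
    (hY : IsClosed Y) (hX : IsClosed X) (hXY : X ⊆ Y) (hYc : Yᶜ.Nonempty)
    (hXc : IsPreconnected Xᶜ) (x : α) {z : α} (hz : z ∉ connectedComponentIn (Y \ X) x ∪ X) :
    (connectedComponentIn (connectedComponentIn (Y \ X) x ∪ X)ᶜ z ∩ Yᶜ).Nonempty := by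
  set D := connectedComponentIn (Y \ X) x
  set V := connectedComponentIn (D ∪ X)ᶜ z
  by_contra hVYc
  have hVY : V ⊆ Y := fun w hw => by_contra fun hwY => hVYc ⟨w, hw, hwY⟩
  have hzV : z ∈ V := mem_connectedComponentIn hz
  have hVYX : V ⊆ Y \ X := fun w hw =>
    ⟨hVY hw, fun hwX => connectedComponentIn_subset _ _ hw (Or.inr hwX)⟩
  have hVDz : V ⊆ connectedComponentIn (Y \ X) z :=
    isPreconnected_connectedComponentIn.subset_connectedComponentIn hzV hVYX
  have hclosure : closure V ∩ Xᶜ ⊆ V := by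
    rintro w ⟨hwV, hwX⟩
    have hwD : w ∉ D := fun hwD => by
      have hwDz : w ∈ connectedComponentIn (Y \ X) z :=
        closure_connectedComponentIn_inter_subset _ z
          ⟨closure_mono hVDz hwV, closure_minimal hVY hY hwV, hwX⟩
      have hDz : D = connectedComponentIn (Y \ X) z :=
        (connectedComponentIn_eq hwD).trans (connectedComponentIn_eq hwDz).symm
      exact hz (Or.inl (hDz ▸ mem_connectedComponentIn (hVYX hzV)))
    exact closure_connectedComponentIn_inter_subset _ z ⟨hwV, fun h => h.elim hwD hwX⟩
  have hXcV : Xᶜ ⊆ V :=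
    hXc.subset_of_closure_inter_subset
      (isClosed_connectedComponentIn_diff_union hY hX x).isOpen_compl.connectedComponentIn
      ⟨z, fun h => hz (Or.inr h), hzV⟩ hclosure
  obtain ⟨y, hy⟩ := hYc
  exact hy (hVY (hXcV fun hyX => hy (hXY hyX)))

theorem isPreconnected_compl_connectedComponentIn_diff_union (hY : IsClosed Y) (hX : IsClosed X)
    (hXY : X ⊆ Y) (hYc : IsConnected Yᶜ) (hXc : IsPreconnected Xᶜ) (x : α) :
    IsPreconnected (connectedComponentIn (Y \ X) x ∪ X)ᶜ := by
  obtain ⟨y, hy⟩ := hYc.nonempty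
  have hYK : Yᶜ ⊆ (connectedComponentIn (Y \ X) x ∪ X)ᶜ :=
    compl_subset_compl.mpr (connectedComponentIn_diff_union_subset hXY x)
  refine isPreconnected_of_forall y fun z hz => ⟨_, union_subset (connectedComponentIn_subset _ z)
    hYK, Or.inr hy, Or.inl (mem_connectedComponentIn hz), ?_⟩
  exact IsPreconnected.union'
    (connectedComponentIn_compl_diff_union_inter_compl_nonempty hY hX hXY
      hYc.nonempty hXc x hz) isPreconnected_connectedComponentIn hYc.isPreconnected

end Complement

theorem stmt2 (X Y : Set ℂ) (hX : FullContinuum X) (hY : FullContinuum Y)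
    (hXY : X ⊆ Y) (D : Set ℂ)
    (hD : ∃ x ∈ Y \ X, D = connectedComponentIn (Y \ X) x) :
    D ∪ X = closure D ∪ X ∧ FullContinuum (D ∪ X) := by
  obtain ⟨hXcomp, hXconn, hXc⟩ := hX
  obtain ⟨hYcomp, hYconn, hYc⟩ := hY
  obtain ⟨x, hx, rfl⟩ := hD
  have heq := connectedComponentIn_diff_union_eq hYcomp.isClosed X x
  refine ⟨heq, ?_, ?_, ⟨hYc.nonempty.mono ?_, ?_⟩⟩
  · exact hYcomp.of_isClosed_subset
      (isClosed_connectedComponentIn_diff_union hYcomp.isClosed hXcomp.isClosed x)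
      (connectedComponentIn_diff_union_subset hXY x)
  · rw [heq]
    exact IsConnected.union (hYcomp.closure_connectedComponentIn_diff_inter_nonempty
      hYconn.isPreconnected hXcomp.isClosed (hXconn.nonempty.mono fun y hy => ⟨hXY hy, hy⟩) hx)
      (isConnected_connectedComponentIn_iff.mpr hx).closure hXconn
  · exact compl_subset_compl.mpr (connectedComponentIn_diff_union_subset hXY x)
  · exact isPreconnected_compl_connectedComponentIn_diff_union hYcomp.isClosed hXcomp.isClosed
      hXY hYc hXc.isPreconnected x
end

section
/- Let f : ℂ → ℂ be a complex polynomial map of degree 3, let V ⊆ ℂ be a nonempty open set, and let U be a connected component of f⁻¹(V) with the property that for every w ∈ V the number of solutions of f(z) = w lying in U, counted with multiplicity (i.e., the sum over z ∈ U with f(z) = w of the multiplicity of z as a root of the polynomial f − w), equals 2. Then for every w ∈ V there is exactly one point z ∈ f⁻¹(V) ∖ U with f(z) = w, that root is simple, and the restriction of f to f⁻¹(V) ∖ U is a homeomorphism onto V. -/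
/-!
Over `ℂ` the cubic `p - C w` has three roots with multiplicity, two of which lie in `U`, so
exactly one simple root lies outside `U`; thus `p` maps `p⁻¹(V) \ U` bijectively onto `V`.
Since `U` is a component of the open set `p⁻¹(V)`, the set `p⁻¹(V) \ U` is a union of the other
components and hence open, and a nonconstant polynomial is an open map, so this continuous open
bijection is a homeomorphism.
-/

open Polynomial Set

namespace Polynomial

variable {R : Type*} [CommRing R] [IsDomain R] {q : R[X]} {P : R → Prop} [DecidablePred P]

theorem ne_zero_of_card_filter_roots_eq_one (h : (q.roots.filter P).card = 1) : q ≠ 0 := by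
  rintro rfl
  simp at h

theorem existsUnique_isRoot_of_card_filter_roots_eq_one (h : (q.roots.filter P).card = 1) :
    ∃! z, P z ∧ q.IsRoot z := by
  obtain ⟨z, hz⟩ := Multiset.card_eq_one.mp h
  have hmem : ∀ y, P y ∧ q.IsRoot y ↔ y = z := fun y => by
    rw [← Multiset.mem_singleton, ← hz, Multiset.mem_filter,
      mem_roots (ne_zero_of_card_filter_roots_eq_one h), and_comm]
  exact ⟨z, (hmem z).2 rfl, fun y hy => (hmem y).1 hy⟩

theorem rootMultiplicity_eq_one_of_card_filter_roots_eq_one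
    (h : (q.roots.filter P).card = 1) {z : R} (hz : P z) (hroot : q.IsRoot z) :
    q.rootMultiplicity z = 1 := by
  classical
  have hle := Multiset.count_le_card z (q.roots.filter P)
  rw [h, Multiset.count_filter_of_pos hz, count_roots] at hle
  have hpos := (rootMultiplicity_pos (ne_zero_of_card_filter_roots_eq_one h)).2 hroot
  omega

end Polynomial

theorem IsOpen.sdiff_connectedComponentIn {α : Type*} [TopologicalSpace α]
    [LocallyConnectedSpace α] {F : Set α} (hF : IsOpen F) (x : α) :
    IsOpen (F \ connectedComponentIn F x) := by
  rw [isOpen_iff_mem_nhds]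
  rintro y ⟨hyF, hyx⟩
  filter_upwards [connectedComponentIn_mem_nhds (hF.mem_nhds hyF)] with z hzy
  refine ⟨connectedComponentIn_subset F y hzy, fun hzx => hyx ?_⟩
  rw [connectedComponentIn_eq hzx, ← connectedComponentIn_eq hzy]
  exact mem_connectedComponentIn hyF

theorem Set.bijOn_of_existsUnique {α β : Type*} {f : α → β} {s : Set α} {t : Set β}
    (hst : MapsTo f s t) (h : ∀ w ∈ t, ∃! z, z ∈ s ∧ f z = w) : BijOn f s t := by
  refine ⟨hst, fun a ha b hb hab => ?_, fun w hw => ?_⟩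
  · obtain ⟨z, -, hz⟩ := h (f a) (hst ha)
    exact (hz a ⟨ha, rfl⟩).trans (hz b ⟨hb, hab.symm⟩).symm
  · obtain ⟨z, hz, -⟩ := h w hw
    exact ⟨z, hz⟩

noncomputable def Set.BijOn.homeomorphOfIsOpenMap {X Y : Type*} [TopologicalSpace X]
    [TopologicalSpace Y] {f : X → Y} {s : Set X} {t : Set Y} (h : BijOn f s t) (hs : IsOpen s)
    (hf : ContinuousOn f s) (hfo : IsOpenMap f) : s ≃ₜ t :=
  (h.equiv f).toHomeomorphOfContinuousOpen (hf.mapsToRestrict h.mapsTo)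
    (hfo.mapsToRestrict hs h.mapsTo)

open scoped Classical in
theorem stmt6_general (p : Polynomial ℂ) (hdeg : p.natDegree = 3)
    (V : Set ℂ) (hVopen : IsOpen V)
    (U : Set ℂ)
    (hU : ∃ x ∈ (fun z => p.eval z) ⁻¹' V,
      U = connectedComponentIn ((fun z => p.eval z) ⁻¹' V) x)
    (hcount : ∀ w ∈ V,
      (((p - Polynomial.C w).roots.filter (fun z => z ∈ U)).card = 2)) :
    (∀ w ∈ V, ∃! z : ℂ, z ∈ (fun z => p.eval z) ⁻¹' V \ U ∧ p.eval z = w) ∧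
    (∀ w ∈ V, ∀ z ∈ (fun z => p.eval z) ⁻¹' V \ U, p.eval z = w →
      Polynomial.rootMultiplicity z (p - Polynomial.C w) = 1) ∧
    (∃ e : (((fun z => p.eval z) ⁻¹' V \ U : Set ℂ)) ≃ₜ V,
      ∀ z : (((fun z => p.eval z) ⁻¹' V \ U : Set ℂ)), (e z : ℂ) = p.eval (z : ℂ)) := by
  have hout : ∀ w ∈ V, ((p - C w).roots.filter (fun z => z ∉ U)).card = 1 := fun w hw => by
    have h3 : (p - C w).roots.card = 3 := by
      rw [IsAlgClosed.card_roots_eq_natDegree, natDegree_sub_C, hdeg]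
    rw [← Multiset.filter_add_not (· ∈ U) (p - C w).roots, Multiset.card_add, hcount w hw] at h3
    omega
  have hunique : ∀ w ∈ V, ∃! z : ℂ, z ∈ (fun z => p.eval z) ⁻¹' V \ U ∧ p.eval z = w :=
    fun w hw => by
      obtain ⟨z, ⟨hzU, hzw⟩, hz⟩ := existsUnique_isRoot_of_card_filter_roots_eq_one (hout w hw)
      rw [IsRoot, eval_sub, eval_C, sub_eq_zero] at hzw
      refine ⟨z, ⟨⟨by simp [hzw, hw], hzU⟩, hzw⟩, fun y ⟨hy, hyw⟩ => hz y ⟨hy.2, ?_⟩⟩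
      simp [hyw]
  refine ⟨hunique, fun w hw z hz hzw => rootMultiplicity_eq_one_of_card_filter_roots_eq_one
    (hout w hw) hz.2 (by simp [hzw]), ?_⟩
  obtain ⟨x, -, rfl⟩ := hU
  have hbij := bijOn_of_existsUnique (fun _ hz => hz.1) hunique
  have hopen : IsOpenMap p.eval := (p.isOpenQuotientMap_eval (by omega)).isOpenMap
  exact ⟨hbij.homeomorphOfIsOpenMap ((hVopen.preimage p.continuous).sdiff_connectedComponentIn x)
    p.continuous.continuousOn hopen, fun _ => rfl⟩

open scoped Classical in
theorem stmt6 (p : Polynomial ℂ) (hdeg : p.natDegree = 3)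
    (V : Set ℂ) (hVne : V.Nonempty) (hVopen : IsOpen V)
    (U : Set ℂ)
    (hU : ∃ x ∈ (fun z => p.eval z) ⁻¹' V,
      U = connectedComponentIn ((fun z => p.eval z) ⁻¹' V) x)
    (hcount : ∀ w ∈ V,
      (((p - Polynomial.C w).roots.filter (fun z => z ∈ U)).card = 2)) :
    (∀ w ∈ V, ∃! z : ℂ, z ∈ (fun z => p.eval z) ⁻¹' V \ U ∧ p.eval z = w) ∧
    (∀ w ∈ V, ∀ z ∈ (fun z => p.eval z) ⁻¹' V \ U, p.eval z = w →
      Polynomial.rootMultiplicity z (p - Polynomial.C w) = 1) ∧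
    (∃ e : (((fun z => p.eval z) ⁻¹' V \ U : Set ℂ)) ≃ₜ V,
      ∀ z : (((fun z => p.eval z) ⁻¹' V \ U : Set ℂ)), (e z : ℂ) = p.eval (z : ℂ)) :=
  stmt6_general p hdeg V hVopen U hU hcount
end

section
/- Let g : X → Y be a continuous map between topological spaces that is both an open map and a closed map. Let D ⊆ Y be a connected set, and let E be a nonempty connected component of g⁻¹(D) that is open in the subspace g⁻¹(D). Then g(E) = D. -/
/-!
The image under `g` of a subset `E` of `g ⁻¹' D` that is both open and closed in `g ⁻¹' D` is
`g '' O ∩ D` for an open `O` and `g '' K ∩ D` for a closed `K`, so it is clopen in `D`; if `E` is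
nonempty and `D` is connected, then `g '' E = D`. A connected component of `g ⁻¹' D` is always
closed in `g ⁻¹' D`, since its closure in `g ⁻¹' D` is still connected.
-/

open Set

section

variable {X Y : Type*} [TopologicalSpace X] [TopologicalSpace Y]

theorem IsPreconnected.subset_of_inter_eq_inter {s U F : Set X} (hs : IsPreconnected s)
    (hU : IsOpen U) (hF : IsClosed F) (hUF : s ∩ U = s ∩ F) (hne : (s ∩ U).Nonempty) :
    s ⊆ U := by
  intro y hys
  by_contra hyU
  have hyF : y ∉ F := fun hyF => hyU (hUF ▸ ⟨hys, hyF⟩ : y ∈ s ∩ U).2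
  have hcover : s ⊆ U ∪ Fᶜ := fun z hzs => by
    by_cases hzU : z ∈ U
    · exact Or.inl hzU
    · exact Or.inr fun hzF => hzU (hUF ▸ ⟨hzs, hzF⟩ : z ∈ s ∩ U).2
  obtain ⟨z, hzs, hzU, hzF⟩ := hs U Fᶜ hU hF.isOpen_compl hcover hne ⟨y, hys, hyF⟩
  exact hzF (hUF ▸ ⟨hzs, hzU⟩ : z ∈ s ∩ F).2

theorem closure_connectedComponentIn_inter (F : Set X) (x : X) :
    closure (connectedComponentIn F x) ∩ F = connectedComponentIn F x := by
  refine subset_antisymm ?_ (subset_inter subset_closure (connectedComponentIn_subset F x))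
  by_cases hx : x ∈ F
  · exact (isPreconnected_connectedComponentIn.subset_closure
      (subset_inter subset_closure (connectedComponentIn_subset F x)) inter_subset_left)
      |>.subset_connectedComponentIn ⟨subset_closure (mem_connectedComponentIn hx), hx⟩
        inter_subset_right
  · simp [connectedComponentIn_eq_empty hx]

theorem IsPreconnected.image_inter_preimage_eq {g : X → Y} (hgo : IsOpenMap g)
    (hgcl : IsClosedMap g) {D : Set Y} (hD : IsPreconnected D) {O K : Set X} (hO : IsOpen O)
    (hK : IsClosed K) (hOK : O ∩ g ⁻¹' D = K ∩ g ⁻¹' D) (hne : (O ∩ g ⁻¹' D).Nonempty) :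
    g '' (O ∩ g ⁻¹' D) = D := by
  have hDO : D ⊆ g '' O := by
    refine hD.subset_of_inter_eq_inter (hgo O hO) (hgcl K hK) ?_ ?_
    · rw [inter_comm, ← image_inter_preimage, hOK, image_inter_preimage, inter_comm]
    · rw [inter_comm, ← image_inter_preimage]
      exact hne.image g
  rw [image_inter_preimage, inter_eq_right.2 hDO]

end

theorem stmt7_general {X Y : Type*} [TopologicalSpace X] [TopologicalSpace Y]
    (g : X → Y) (hgo : IsOpenMap g) (hgcl : IsClosedMap g)
    (D : Set Y) (hD : IsConnected D)
    (E : Set X) (hE : ∃ x ∈ g ⁻¹' D, E = connectedComponentIn (g ⁻¹' D) x)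
    (hEopen : ∃ O : Set X, IsOpen O ∧ E = O ∩ g ⁻¹' D) :
    g '' E = D := by
  obtain ⟨x, hx, rfl⟩ := hE
  obtain ⟨O, hO, hEO⟩ := hEopen
  have hEclosed := closure_connectedComponentIn_inter (g ⁻¹' D) x
  rw [hEO] at hEclosed ⊢
  exact hD.isPreconnected.image_inter_preimage_eq hgo hgcl hO isClosed_closure
    hEclosed.symm (hEO ▸ ⟨x, mem_connectedComponentIn hx⟩)

theorem stmt7 {X Y : Type*} [TopologicalSpace X] [TopologicalSpace Y]
    (g : X → Y) (hgc : Continuous g) (hgo : IsOpenMap g) (hgcl : IsClosedMap g)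
    (D : Set Y) (hD : IsConnected D)
    (E : Set X) (hE : ∃ x ∈ g ⁻¹' D, E = connectedComponentIn (g ⁻¹' D) x)
    (hEopen : ∃ O : Set X, IsOpen O ∧ E = O ∩ g ⁻¹' D) :
    g '' E = D :=
  stmt7_general g hgo hgcl D hD E hE hEopen
end

section
/- Let q ∈ (0,1), let N be a positive integer with 2q^N < 1/2, and let s : ℕ → ℝ be a sequence of nonnegative real numbers. Let S be a (possibly empty, finite, or infinite) set of positive integers, enumerated n₁ < n₂ < ⋯, such that n₁ ≥ N and n_{i+1} − n_i ≥ N for all i. Assume that s_{m+1} ≤ q·s_m whenever m + 1 ∉ S, and s_{m+1} ≤ 2q·s_m whenever m + 1 ∈ S. Then s_m ≤ s₀ · 2^{−m/N} for every m ≥ 0. -/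
/-!
Unrolling the recursion gives `s m ≤ s 0 * q ^ m * 2 ^ c`, where `c` counts the points of `S` in
`[1, m]`. Since these points are `N`-separated and at least `N`, the intervals of length `N` ending
at them are disjoint subsets of `[1, m]`, so `c * N ≤ m`. Hence
`(q ^ m * 2 ^ c) ^ N ≤ (q ^ N) ^ m * 2 ^ m ≤ 4⁻¹ ^ m * 2 ^ m = 2 ^ (-m)`.
-/

open Finset

theorem Nat.count_mul_le_of_separated {p : ℕ → Prop} [DecidablePred p] {N : ℕ}
    (hfirst : ∀ k, p k → N ≤ k + 1) (hsep : ∀ a b, p a → p b → a < b → a + N ≤ b) (m : ℕ) :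
    Nat.count p m * N ≤ m := by
  rw [Nat.count_eq_card_filter_range]
  set T := {k ∈ range m | p k}
  have hdisj : (T : Set ℕ).PairwiseDisjoint fun k => Ico (k + 1 - N) (k + 1) := by
    intro a ha b hb hab
    rw [Function.onFun, disjoint_left]
    intro x hxa hxb
    simp only [mem_Ico] at hxa hxb
    rcases lt_or_gt_of_ne hab with h | h
    · have := hsep a b (mem_filter.1 ha).2 (mem_filter.1 hb).2 h
      omega
    · have := hsep b a (mem_filter.1 hb).2 (mem_filter.1 ha).2 h
      omega
  have hsub : T.biUnion (fun k => Ico (k + 1 - N) (k + 1)) ⊆ range m := by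
    intro x hx
    simp only [mem_biUnion, mem_filter, mem_range, mem_Ico, T] at hx ⊢
    omega
  calc #T * N = ∑ k ∈ T, #(Ico (k + 1 - N) (k + 1)) := by
        rw [sum_congr rfl fun k hk => ?_, sum_const, smul_eq_mul]
        have := hfirst k (mem_filter.1 hk).2
        rw [Nat.card_Ico]
        omega
    _ = #(T.biUnion fun k => Ico (k + 1 - N) (k + 1)) := (card_biUnion hdisj).symm
    _ ≤ m := (card_le_card hsub).trans (card_range m).le

theorem le_mul_pow_mul_two_pow_count {s : ℕ → ℝ} {q : ℝ} (hq : 0 ≤ q) (p : ℕ → Prop)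
    [DecidablePred p] (hgood : ∀ m, ¬ p m → s (m + 1) ≤ q * s m)
    (hbad : ∀ m, p m → s (m + 1) ≤ 2 * q * s m) (m : ℕ) :
    s m ≤ s 0 * q ^ m * 2 ^ Nat.count p m := by
  induction m with
  | zero => simp
  | succ m ih =>
    rw [Nat.count_succ]
    by_cases hm : p m
    · calc s (m + 1) ≤ 2 * q * s m := hbad m hm
        _ ≤ 2 * q * (s 0 * q ^ m * 2 ^ Nat.count p m) := by gcongr
        _ = _ := by rw [if_pos hm]; ring
    · calc s (m + 1) ≤ q * s m := hgood m hm
        _ ≤ q * (s 0 * q ^ m * 2 ^ Nat.count p m) := by gcongr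
        _ = _ := by rw [if_neg hm]; ring

theorem pow_mul_two_pow_le_two_rpow {q : ℝ} (hq : 0 ≤ q) {N c m : ℕ} (hN : N ≠ 0)
    (hqN : q ^ N ≤ 1 / 4) (hc : c * N ≤ m) :
    q ^ m * 2 ^ c ≤ (2 : ℝ) ^ (-(m : ℝ) / N) := by
  refine le_of_pow_le_pow_left₀ hN (by positivity) ?_
  calc (q ^ m * 2 ^ c) ^ N = (q ^ N) ^ m * 2 ^ (c * N) := by ring
    _ ≤ (1 / 4) ^ m * 2 ^ m := by
        gcongr
        norm_num
    _ = ((2 : ℝ) ^ (-(m : ℝ) / N)) ^ N := by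
        rw [← Real.rpow_mul_natCast (by norm_num), div_mul_cancel₀ _ (by exact_mod_cast hN),
          Real.rpow_neg (by norm_num), Real.rpow_natCast, ← mul_pow, ← inv_pow]
        norm_num

theorem stmt8_general (q : ℝ) (hq : q ∈ Set.Ioo (0:ℝ) 1) (N : ℕ)
    (hqN : 2 * q ^ N < 1 / 2)
    (s : ℕ → ℝ) (hs : ∀ n, 0 ≤ s n)
    (S : Set ℕ)
    (hSfirst : ∀ n ∈ S, N ≤ n)
    (hSgap : ∀ m ∈ S, ∀ n ∈ S, m < n → m + N ≤ n)
    (hgood : ∀ m : ℕ, m + 1 ∉ S → s (m + 1) ≤ q * s m)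
    (hbad : ∀ m : ℕ, m + 1 ∈ S → s (m + 1) ≤ 2 * q * s m) :
    ∀ m : ℕ, s m ≤ s 0 * (2 : ℝ) ^ (-(m : ℝ) / (N : ℝ)) := by
  classical
  intro m
  have hN : N ≠ 0 := by
    rintro rfl
    norm_num at hqN
  have hcount := Nat.count_mul_le_of_separated (p := fun k => k + 1 ∈ S)
    (fun k hk => hSfirst _ hk) (fun a b ha hb hab => by have := hSgap _ ha _ hb (by omega); omega) m
  calc s m ≤ s 0 * q ^ m * 2 ^ Nat.count (fun k => k + 1 ∈ S) m :=
        le_mul_pow_mul_two_pow_count hq.1.le _ hgood hbad m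
    _ = s 0 * (q ^ m * 2 ^ Nat.count (fun k => k + 1 ∈ S) m) := mul_assoc ..
    _ ≤ s 0 * (2 : ℝ) ^ (-(m : ℝ) / (N : ℝ)) := by
        gcongr
        · exact hs 0
        · exact pow_mul_two_pow_le_two_rpow hq.1.le hN (by linarith) hcount

theorem stmt8 (q : ℝ) (hq : q ∈ Set.Ioo (0:ℝ) 1) (N : ℕ) (hN : 0 < N)
    (hqN : 2 * q ^ N < 1 / 2)
    (s : ℕ → ℝ) (hs : ∀ n, 0 ≤ s n)
    (S : Set ℕ) (hSpos : ∀ n ∈ S, 0 < n)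
    (hSfirst : ∀ n ∈ S, N ≤ n)
    (hSgap : ∀ m ∈ S, ∀ n ∈ S, m < n → m + N ≤ n)
    (hgood : ∀ m : ℕ, m + 1 ∉ S → s (m + 1) ≤ q * s m)
    (hbad : ∀ m : ℕ, m + 1 ∈ S → s (m + 1) ≤ 2 * q * s m) :
    ∀ m : ℕ, s m ≤ s 0 * (2 : ℝ) ^ (-(m : ℝ) / (N : ℝ)) :=
  stmt8_general q hq N hqN s hs S hSfirst hSgap hgood hbad
end

section
/- Fix q ∈ (0,1) and b > 0. Let (s_n)_{n≥0} be a sequence of positive real numbers and let B ⊆ ℕ be an infinite set of 'bad' subscripts, enumerated n₁ < n₂ < ⋯, such that s_{n+1} = q·s_n for every n ∉ B and s_{n+1} ≤ 2q·s_n + b for every n ∈ B. If n_{i+1} − n_i → ∞ as i → ∞, then s_{n_i} → 0 as i → ∞. -/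
/-!
Between two consecutive bad subscripts `nᵢ < nᵢ₊₁` only good steps occur, so
`s_{nᵢ₊₁} ≤ q^(dᵢ - 1) (2q s_{nᵢ} + b)` with `dᵢ = nᵢ₊₁ - nᵢ`. Hence `tᵢ = s_{nᵢ}` satisfies
`tᵢ₊₁ ≤ rᵢ tᵢ + eᵢ` with `rᵢ, eᵢ → 0` because `dᵢ → ∞`; once `rᵢ ≤ 1/2`, this recursion
drives `tᵢ` below any `ε > 0`.
-/

open Filter Topology

theorem apply_add_eq_pow_mul {M : Type*} [Monoid M] {s : ℕ → M} {q : M} {a k : ℕ}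
    (h : ∀ j < k, s (a + j + 1) = q * s (a + j)) : s (a + k) = q ^ k * s a := by
  induction k with
  | zero => simp
  | succ k ih =>
    rw [← add_assoc, h k k.lt_succ_self, ih fun j hj => h j (hj.trans k.lt_succ_self),
      pow_succ', mul_assoc]

theorem le_pow_mul_of_step_le_of_run {R : Type*} [Semiring R] [PartialOrder R] [IsOrderedRing R]
    {s : ℕ → R} {q c b : R} (hq : 0 ≤ q) {a a' : ℕ} (haa' : a < a')
    (hstep : s (a + 1) ≤ c * s a + b) (hrun : ∀ n, a < n → n < a' → s (n + 1) = q * s n) :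
    s a' ≤ q ^ (a' - a - 1) * (c * s a + b) := by
  have hs : s a' = q ^ (a' - a - 1) * s (a + 1) := by
    have := apply_add_eq_pow_mul (s := s) (q := q) (a := a + 1) (k := a' - a - 1)
      fun j hj => hrun (a + 1 + j) (by omega) (by omega)
    rwa [show a + 1 + (a' - a - 1) = a' by omega] at this
  rw [hs]
  exact mul_le_mul_of_nonneg_left hstep (pow_nonneg hq _)

theorem tendsto_zero_of_le_const_mul_add {t e : ℕ → ℝ} {r : ℝ} (hr0 : 0 ≤ r) (hr1 : r < 1)
    (ht : ∀ i, 0 ≤ t i) (he : Tendsto e atTop (𝓝 0))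
    (hrec : ∀ᶠ i in atTop, t (i + 1) ≤ r * t i + e i) : Tendsto t atTop (𝓝 0) := by
  refine tendsto_order.2 ⟨fun a ha => .of_forall fun i => ha.trans_le (ht i), fun ε hε => ?_⟩
  obtain ⟨N, hN⟩ := eventually_atTop.1 <|
    hrec.and (he.eventually (gt_mem_nhds (by nlinarith : (0 : ℝ) < (1 - r) * (ε / 2))))
  have hbound : ∀ k, t (N + k) ≤ r ^ k * t N + ε / 2 := by
    intro k
    induction k with
    | zero => simp only [add_zero, pow_zero, one_mul]; linarith
    | succ k ih =>
      obtain ⟨hk, hek⟩ := hN (N + k) (by omega)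
      calc t (N + (k + 1)) ≤ r * t (N + k) + e (N + k) := hk
        _ ≤ r * (r ^ k * t N + ε / 2) + (1 - r) * (ε / 2) := by gcongr
        _ = r ^ (k + 1) * t N + ε / 2 := by ring
  have hlim : Tendsto (fun k => r ^ k * t N + ε / 2) atTop (𝓝 (ε / 2)) := by
    simpa using ((tendsto_pow_atTop_nhds_zero_of_lt_one hr0 hr1).mul_const (t N)).add_const (ε / 2)
  obtain ⟨K, hK⟩ := eventually_atTop.1 (hlim.eventually (gt_mem_nhds (half_lt_self hε)))
  refine eventually_atTop.2 ⟨N + K, fun i hi => ?_⟩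
  obtain ⟨k, rfl⟩ := Nat.exists_eq_add_of_le (show N ≤ i by omega)
  exact (hbound k).trans_lt (hK k (by omega))

theorem tendsto_zero_of_le_mul_add {t r e : ℕ → ℝ} (ht : ∀ i, 0 ≤ t i)
    (hr : Tendsto r atTop (𝓝 0)) (he : Tendsto e atTop (𝓝 0))
    (hrec : ∀ᶠ i in atTop, t (i + 1) ≤ r i * t i + e i) : Tendsto t atTop (𝓝 0) := by
  refine tendsto_zero_of_le_const_mul_add (r := 1 / 2) (by norm_num) (by norm_num) ht he ?_
  filter_upwards [hrec, hr.eventually (ge_mem_nhds (by norm_num : (0 : ℝ) < 1 / 2))]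
    with i hi hri
  exact hi.trans (by gcongr; exact ht i)

theorem stmt9_general (q b : ℝ) (hq : q ∈ Set.Ioo (0:ℝ) 1)
    (s : ℕ → ℝ) (hs : ∀ n, 0 < s n)
    (B : Set ℕ) (hB : B.Infinite)
    (hgood : ∀ n : ℕ, n ∉ B → s (n + 1) = q * s n)
    (hbad : ∀ n ∈ B, s (n + 1) ≤ 2 * q * s n + b)
    (hgap : Filter.Tendsto
      (fun i => Nat.nth (· ∈ B) (i + 1) - Nat.nth (· ∈ B) i)
      Filter.atTop Filter.atTop) :
    Filter.Tendsto (fun i => s (Nat.nth (· ∈ B) i)) Filter.atTop (nhds 0) := by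
  obtain ⟨hq0, hq1⟩ := hq
  set n := Nat.nth (· ∈ B)
  have hstep : ∀ i, s (n (i + 1)) ≤ q ^ (n (i + 1) - n i - 1) * (2 * q * s (n i) + b) :=
    fun i => le_pow_mul_of_step_le_of_run hq0.le (Nat.nth_strictMono hB i.lt_succ_self)
      (hbad _ (Nat.nth_mem_of_infinite hB i))
      fun k hlo hhi => hgood k fun hk => (Nat.le_nth_of_lt_nth_succ hhi hk).not_gt hlo
  have hpow : Tendsto (fun i => q ^ (n (i + 1) - n i - 1)) atTop (𝓝 0) :=
    (tendsto_pow_atTop_nhds_zero_of_lt_one hq0.le hq1).comp ((tendsto_sub_atTop_nat 1).comp hgap)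
  refine tendsto_zero_of_le_mul_add (fun i => (hs _).le) (by simpa using hpow.mul_const (2 * q))
    (by simpa using hpow.mul_const b) (.of_forall fun i => (hstep i).trans_eq ?_)
  ring

theorem stmt9 (q b : ℝ) (hq : q ∈ Set.Ioo (0:ℝ) 1) (hb : 0 < b)
    (s : ℕ → ℝ) (hs : ∀ n, 0 < s n)
    (B : Set ℕ) (hB : B.Infinite)
    (hgood : ∀ n : ℕ, n ∉ B → s (n + 1) = q * s n)
    (hbad : ∀ n ∈ B, s (n + 1) ≤ 2 * q * s n + b)
    (hgap : Filter.Tendsto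
      (fun i => Nat.nth (· ∈ B) (i + 1) - Nat.nth (· ∈ B) i)
      Filter.atTop Filter.atTop) :
    Filter.Tendsto (fun i => s (Nat.nth (· ∈ B) i)) Filter.atTop (nhds 0) :=
  stmt9_general q b hq s hs B hB hgood hbad hgap
end

section
/- Let h : ℝ/ℤ → ℝ/ℤ be a homeomorphism of the circle satisfying h(2x) = 2·h(x) for all x ∈ ℝ/ℤ (i.e., h commutes with the angle-doubling map), and suppose h is orientation preserving in the sense that it admits a lift H : ℝ → ℝ which is continuous, monotone nondecreasing, satisfies H(x + 1) = H(x) + 1 for all x, and satisfies h(x mod 1) = H(x) mod 1. Then h is the identity map of ℝ/ℤ. -/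
/-!
For a continuous lift `H` of `h` with `H (x + 1) = H x + 1`, commuting with doubling says that
`H (2x) - 2 H x` is an integer; being continuous, it is the constant `-H 0`. Hence
`ψ x = H x - x - H 0` is `1`-periodic, so bounded, and `ψ (2x) = 2 ψ x`, which forces `ψ = 0`.
So `H` is translation by `H 0`, and `H 0 ≡ h 0 = 0`, the only fixed point of doubling.
-/

open Function Set

theorem Continuous.apply_eq_apply_of_mem_range_intCast {X : Type*} [TopologicalSpace X]
    [PreconnectedSpace X] {g : X → ℝ} (hg : Continuous g)
    (hint : ∀ x, g x ∈ range ((↑) : ℤ → ℝ)) (x y : X) : g x = g y :=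
  isPreconnected_univ.constant_of_mapsTo Real.isClosedEmbedding_intCast.isInducing.isDiscrete_range
    hg.continuousOn (fun x _ ↦ hint x) trivial trivial

theorem eq_zero_of_isBounded_range_of_semiconj_mul {α : Type*} {f : α → ℝ} {T : α → α} {c : ℝ}
    (hc : 1 < |c|) (hf : Bornology.IsBounded (range f)) (hT : Semiconj f T (c * ·)) (x : α) :
    f x = 0 := by
  obtain ⟨M, hM⟩ := hf.exists_norm_le
  have hiter : ∀ n : ℕ, f (T^[n] x) = c ^ n * f x := fun n ↦ by
    rw [(hT.iterate_right n).eq, mul_left_iterate]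
  by_contra hx
  have hpos : 0 < |f x| := abs_pos.mpr hx
  obtain ⟨n, hn⟩ := pow_unbounded_of_one_lt (M / |f x|) hc
  have hbound : |f (T^[n] x)| ≤ M := hM _ (mem_range_self _)
  rw [hiter, abs_mul, abs_pow] at hbound
  rw [div_lt_iff₀ hpos] at hn
  linarith

theorem AddCircle.sub_mem_range_intCast_of_coe_eq {a b : ℝ}
    (h : (a : AddCircle (1 : ℝ)) = b) : a - b ∈ range ((↑) : ℤ → ℝ) := by
  rw [← sub_eq_zero, ← AddCircle.coe_sub, AddCircle.coe_eq_zero_iff] at h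
  obtain ⟨n, hn⟩ := h
  exact ⟨n, by simpa using hn⟩

theorem eq_add_apply_zero_of_two_mul_sub_mem_range_intCast {F : ℝ → ℝ} (hcont : Continuous F)
    (hper : ∀ x, F (x + 1) = F x + 1) (hint : ∀ x, F (2 * x) - 2 * F x ∈ range ((↑) : ℤ → ℝ))
    (x : ℝ) : F x = x + F 0 := by
  have hdefect : ∀ y, F (2 * y) = 2 * F y - F 0 := fun y ↦ by
    have : F (2 * y) - 2 * F y = F (2 * 0) - 2 * F 0 :=
      (by fun_prop : Continuous fun y ↦ F (2 * y) - 2 * F y).apply_eq_apply_of_mem_range_intCast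
        hint y 0
    rw [mul_zero] at this
    linarith
  set ψ : ℝ → ℝ := fun y ↦ F y - y - F 0
  have hψper : Periodic ψ 1 := fun y ↦ by simp only [ψ, hper]; ring
  have hψ : ψ x = 0 :=
    eq_zero_of_isBounded_range_of_semiconj_mul (T := (2 * ·)) (c := 2) (by norm_num)
      (hψper.isBounded_of_continuous one_ne_zero (by fun_prop))
      (fun y ↦ by simp only [ψ, hdefect]; ring) x
  simp only [ψ] at hψ
  linarith

theorem stmt10_general (h : AddCircle (1 : ℝ) ≃ₜ AddCircle (1 : ℝ))
    (hdouble : ∀ x : AddCircle (1 : ℝ), h (2 • x) = 2 • h x)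
    (H : ℝ → ℝ) (hHcont : Continuous H)
    (hHper : ∀ x : ℝ, H (x + 1) = H x + 1)
    (hlift : ∀ x : ℝ, h (x : AddCircle (1 : ℝ)) = (H x : AddCircle (1 : ℝ))) :
    ∀ x : AddCircle (1 : ℝ), h x = x := by
  have hint : ∀ x, H (2 * x) - 2 * H x ∈ range ((↑) : ℤ → ℝ) := fun x ↦
    AddCircle.sub_mem_range_intCast_of_coe_eq <| by
      rw [← hlift, two_mul, AddCircle.coe_add, ← two_nsmul, hdouble, hlift, ← AddCircle.coe_nsmul,
        two_nsmul, two_mul]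
  have h0 : h 0 = 0 := by
    simpa [two_nsmul] using hdouble 0
  intro x
  induction x using QuotientAddGroup.induction_on with
  | H x =>
    rw [hlift, eq_add_apply_zero_of_two_mul_sub_mem_range_intCast hHcont hHper hint x,
      AddCircle.coe_add, ← hlift, AddCircle.coe_zero, h0, add_zero]

theorem stmt10 (h : AddCircle (1 : ℝ) ≃ₜ AddCircle (1 : ℝ))
    (hdouble : ∀ x : AddCircle (1 : ℝ), h (2 • x) = 2 • h x)
    (H : ℝ → ℝ) (hHcont : Continuous H) (hHmono : Monotone H)
    (hHper : ∀ x : ℝ, H (x + 1) = H x + 1)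
    (hlift : ∀ x : ℝ, h (x : AddCircle (1 : ℝ)) = (H x : AddCircle (1 : ℝ))) :
    ∀ x : AddCircle (1 : ℝ), h x = x :=
  stmt10_general h hdouble H hHcont hHper hlift
end
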